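/- arXiv:2411.06013 — 4 statements merged into one kernel-verified Lean document; each statement's English description precedes it below -/
import Mathlib

section
/- Let d ≥ 1 and let μ_O denote the Haar probability measure on the orthogonal group O(d). For every complex d×d matrix A, the Bochner integral ∫_{O(d)} O·A·Oᵀ dμ_O(O) equals (tr(A)/d) • 1_d, where 1_d is the d×d identity matrix. -/
open MeasureTheory Matrix

attribute [local instance] Matrix.normedAddCommGroup Matrix.normedSpace

/-- Entrywise coercion of a real orthogonal matrix to a complex matrix. -/
def OC {d : ℕ} (O : Matrix.orthogonalGroup (Fin d) ℝ) : Matrix (Fin d) (Fin d) ℂ :=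
  (O : Matrix (Fin d) (Fin d) ℝ).map Complex.ofReal

/-!
By left invariance of the Haar measure, `M = ∫ O A Oᵀ dμ` satisfies `P M Pᵀ = M` for every
orthogonal `P`. Conjugating by the reflection in the `i`-th coordinate negates row and column `i`
and so kills the off-diagonal entries, and conjugating by transpositions permutes the diagonal
entries, so `M` is a scalar matrix. Since `tr (O A Oᵀ) = tr A` and `μ` is a probability measure,
`tr M = tr A`, which determines the scalar.
-/

namespace Matrix

variable {n R : Type*} [Fintype n] [DecidableEq n]

theorem permMatrix_mem_orthogonalGroup [CommRing R] (σ : Equiv.Perm n) :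
    σ.permMatrix R ∈ orthogonalGroup n R := by
  rw [mem_orthogonalGroup_iff, transpose_permMatrix, ← permMatrix_mul, inv_mul_cancel,
    permMatrix_one]

theorem diagonal_mem_orthogonalGroup [CommRing R] {v : n → R} (hv : ∀ i, v i * v i = 1) :
    diagonal v ∈ orthogonalGroup n R := by
  rw [mem_orthogonalGroup_iff, diagonal_transpose, diagonal_mul_diagonal, ← diagonal_one]
  exact congrArg diagonal (funext hv)

theorem isCompact_orthogonalGroup : IsCompact (orthogonalGroup n ℝ : Set (Matrix n n ℝ)) := by
  have hclosed : IsClosed (orthogonalGroup n ℝ : Set (Matrix n n ℝ)) := by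
    have : (orthogonalGroup n ℝ : Set (Matrix n n ℝ)) = {A | A * Aᵀ = 1} :=
      Set.ext fun A => mem_orthogonalGroup_iff n ℝ
    rw [this]
    exact isClosed_eq (continuous_id.matrix_mul continuous_id.matrix_transpose) continuous_const
  refine (isCompact_univ_pi fun _ => isCompact_univ_pi fun _ =>
    isCompact_closedBall (0 : ℝ) 1).of_isClosed_subset hclosed fun A hA i _ j _ => ?_
  -- over `ℝ` the orthogonal group is the unitary group
  simpa using entry_norm_bound_of_unitary hA i j

instance : CompactSpace (orthogonalGroup n ℝ) :=
  isCompact_iff_compactSpace.mp isCompact_orthogonalGroup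

theorem diagonal_mul_mul_transpose_diagonal_apply [CommRing R] (v : n → R) (M : Matrix n n R)
    (i j : n) : (diagonal v * M * (diagonal v)ᵀ) i j = v i * M i j * v j := by
  simp [diagonal_mul, mul_diagonal]

theorem permMatrix_mul_mul_transpose_permMatrix_apply [CommRing R] (σ : Equiv.Perm n)
    (M : Matrix n n R) (i j : n) :
    (σ.permMatrix R * M * (σ.permMatrix R)ᵀ) i j = M (σ i) (σ j) := by
  rw [transpose_permMatrix, PEquiv.toMatrix_toPEquiv_mul, PEquiv.mul_toMatrix_toPEquiv]
  simp [Equiv.Perm.inv_def]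

end Matrix

section Conjugation

variable {d : ℕ}

theorem OC_mul (P O : orthogonalGroup (Fin d) ℝ) : OC (P * O) = OC P * OC O :=
  Matrix.map_mul (f := Complex.ofRealHom)

theorem OC_transpose_mul_self (O : orthogonalGroup (Fin d) ℝ) : (OC O)ᵀ * OC O = 1 := by
  have h : (O : Matrix (Fin d) (Fin d) ℝ)ᵀ * O = 1 := (mem_orthogonalGroup_iff' (Fin d) ℝ).mp O.2
  calc (OC O)ᵀ * OC O = ((O : Matrix (Fin d) (Fin d) ℝ)ᵀ * O).map Complex.ofRealHom :=
        (Matrix.map_mul (f := Complex.ofRealHom)).symm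
    _ = 1 := by simp [h]

theorem continuous_OC : Continuous (OC : orthogonalGroup (Fin d) ℝ → Matrix (Fin d) (Fin d) ℂ) :=
  continuous_subtype_val.matrix_map Complex.continuous_ofReal

theorem OC_diagonal {v : Fin d → ℝ} (hv : ∀ i, v i * v i = 1) :
    OC ⟨diagonal v, diagonal_mem_orthogonalGroup hv⟩ = diagonal fun i => (v i : ℂ) :=
  diagonal_map Complex.ofReal_zero

theorem OC_permMatrix (σ : Equiv.Perm (Fin d)) :
    OC ⟨σ.permMatrix ℝ, permMatrix_mem_orthogonalGroup σ⟩ = σ.permMatrix ℂ := by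
  ext i j
  simp [OC, PEquiv.toMatrix_apply, apply_ite Complex.ofReal]

variable {M : Matrix (Fin d) (Fin d) ℂ} (hM : ∀ O, OC O * M * (OC O)ᵀ = M)
include hM

theorem apply_eq_zero_of_forall_OC_conj_eq {i j : Fin d} (hij : i ≠ j) : M i j = 0 := by
  let v : Fin d → ℝ := fun k => if k = i then -1 else 1
  have hv : ∀ k, v k * v k = 1 := fun k => by by_cases hk : k = i <;> simp [v, hk]
  have h := congrFun₂ (hM ⟨diagonal v, diagonal_mem_orthogonalGroup hv⟩) i j
  rw [OC_diagonal hv, diagonal_mul_mul_transpose_diagonal_apply] at h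
  simpa [v, hij.symm, eq_comm (a := -M i j), self_eq_neg] using h

theorem apply_self_eq_of_forall_OC_conj_eq (i j : Fin d) : M i i = M j j := by
  have h := congrFun₂ (hM ⟨_, permMatrix_mem_orthogonalGroup (Equiv.swap i j)⟩) i i
  rw [OC_permMatrix, permMatrix_mul_mul_transpose_permMatrix_apply, Equiv.swap_apply_left] at h
  exact h.symm

theorem eq_trace_div_smul_one_of_forall_OC_conj_eq : M = (M.trace / d) • 1 := by
  rcases Nat.eq_zero_or_pos d with rfl | hd
  · exact Subsingleton.elim _ _
  set c := M ⟨0, hd⟩ ⟨0, hd⟩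
  have hscalar : M = c • 1 := by
    ext i j
    rcases eq_or_ne i j with rfl | hij
    · simp [c, apply_self_eq_of_forall_OC_conj_eq hM i ⟨0, hd⟩]
    · simp [hij, apply_eq_zero_of_forall_OC_conj_eq hM hij]
  have hd' : (d : ℂ) ≠ 0 := Nat.cast_ne_zero.mpr hd.ne'
  rw [hscalar, trace_smul, trace_one, Fintype.card_fin, smul_eq_mul, mul_div_cancel_right₀ _ hd']

end Conjugation

section Haar

variable {d : ℕ} [MeasurableSpace (orthogonalGroup (Fin d) ℝ)]
  [BorelSpace (orthogonalGroup (Fin d) ℝ)] (μ : Measure (orthogonalGroup (Fin d) ℝ))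
  [μ.IsHaarMeasure]

theorem LinearMap.map_integral_OC_conj {E : Type*} [NormedAddCommGroup E] [NormedSpace ℂ E]
    [CompleteSpace E] (L : Matrix (Fin d) (Fin d) ℂ →ₗ[ℂ] E) (A : Matrix (Fin d) (Fin d) ℂ) :
    L (∫ O, OC O * A * (OC O)ᵀ ∂μ) = ∫ O, L (OC O * A * (OC O)ᵀ) ∂μ :=
  (L.toContinuousLinearMap.integral_comp_comm <|
    ((continuous_OC.matrix_mul continuous_const).matrix_mul
      continuous_OC.matrix_transpose).integrable_of_hasCompactSupport
      (HasCompactSupport.of_compactSpace _)).symm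

theorem OC_conj_integral_OC_conj (A : Matrix (Fin d) (Fin d) ℂ) (P : orthogonalGroup (Fin d) ℝ) :
    OC P * (∫ O, OC O * A * (OC O)ᵀ ∂μ) * (OC P)ᵀ = ∫ O, OC O * A * (OC O)ᵀ ∂μ := by
  let L := (LinearMap.mulRight ℂ (OC P)ᵀ).comp (LinearMap.mulLeft ℂ (OC P))
  calc OC P * (∫ O, OC O * A * (OC O)ᵀ ∂μ) * (OC P)ᵀ
      = ∫ O, OC P * (OC O * A * (OC O)ᵀ) * (OC P)ᵀ ∂μ := L.map_integral_OC_conj μ A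
    _ = ∫ O, OC (P * O) * A * (OC (P * O))ᵀ ∂μ := by
        simp only [OC_mul, transpose_mul, Matrix.mul_assoc]
    _ = ∫ O, OC O * A * (OC O)ᵀ ∂μ := integral_mul_left_eq_self (fun O => OC O * A * (OC O)ᵀ) P

theorem trace_integral_OC_conj [IsProbabilityMeasure μ] (A : Matrix (Fin d) (Fin d) ℂ) :
    (∫ O, OC O * A * (OC O)ᵀ ∂μ).trace = A.trace := by
  calc (∫ O, OC O * A * (OC O)ᵀ ∂μ).trace = ∫ O, (OC O * A * (OC O)ᵀ).trace ∂μ :=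
        (traceLinearMap (Fin d) ℂ ℂ).map_integral_OC_conj μ A
    _ = ∫ _, A.trace ∂μ := by simp only [trace_mul_cycle, OC_transpose_mul_self, one_mul]
    _ = A.trace := by simp only [integral_const, probReal_univ, one_smul]

end Haar

theorem stmt_0_general (d : ℕ)
    [MeasurableSpace (Matrix.orthogonalGroup (Fin d) ℝ)]
    [BorelSpace (Matrix.orthogonalGroup (Fin d) ℝ)]
    (μ : Measure (Matrix.orthogonalGroup (Fin d) ℝ))
    [μ.IsHaarMeasure] [IsProbabilityMeasure μ]
    (A : Matrix (Fin d) (Fin d) ℂ) :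
    ∫ O, OC O * A * (OC O)ᵀ ∂μ = (A.trace / (d : ℂ)) • (1 : Matrix (Fin d) (Fin d) ℂ) := by
  rw [← trace_integral_OC_conj μ A]
  exact eq_trace_div_smul_one_of_forall_OC_conj_eq (OC_conj_integral_OC_conj μ A)

/-- the first moment of the Haar measure on the orthogonal group. -/
theorem stmt_0 (d : ℕ) (hd : 1 ≤ d)
    [MeasurableSpace (Matrix.orthogonalGroup (Fin d) ℝ)]
    [BorelSpace (Matrix.orthogonalGroup (Fin d) ℝ)]
    (μ : Measure (Matrix.orthogonalGroup (Fin d) ℝ))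
    [μ.IsHaarMeasure] [IsProbabilityMeasure μ]
    (A : Matrix (Fin d) (Fin d) ℂ) :
    ∫ O, OC O * A * (OC O)ᵀ ∂μ = (A.trace / (d : ℂ)) • (1 : Matrix (Fin d) (Fin d) ℂ) :=
  stmt_0_general d μ A
end

section
/- Let d ≥ 1 and let ρ be a Hermitian d×d complex matrix. Set A = ρ − ρᵀ and let ‖A‖_tr = tr(√(AᴴA)) denote its trace norm and ‖A‖_F its Frobenius norm. Then ‖A‖_F ≤ ‖A‖_tr, and equality ‖A‖_tr = ‖A‖_F holds if and only if ρᵀ = ρ (equivalently A = 0). -/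
/-!
`A = ρ - ρᵀ` is Hermitian and traceless. In terms of its eigenvalues `λᵢ`,
`‖A‖_tr = ∑ |λᵢ|` and `‖A‖_F = √(∑ λᵢ²)`, so the inequality is `ℓ² ≤ ℓ¹`. Since `∑ λᵢ = 0`,
the positive and the negative eigenvalues each contribute `‖A‖_tr / 2` in absolute value, whence
`2 ‖A‖_F² ≤ ‖A‖_tr²`; equality `‖A‖_F = ‖A‖_tr` therefore forces `‖A‖_tr = 0`.
-/

open Matrix
open scoped ComplexOrder

/-- The trace norm `‖A‖_tr = tr √(Aᴴ A)` of a complex matrix (as a real number). -/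
noncomputable def traceNorm {n : Type*} [Fintype n] [DecidableEq n] (A : Matrix n n ℂ) : ℝ :=
  (((Matrix.posSemidef_conjTranspose_mul_self A).1.eigenvectorUnitary.1 *
    diagonal (((↑) : ℝ → ℂ) ∘ Real.sqrt ∘ (Matrix.posSemidef_conjTranspose_mul_self A).1.eigenvalues) *
    (star (Matrix.posSemidef_conjTranspose_mul_self A).1.eigenvectorUnitary : Matrix n n ℂ)).trace).re

/-- The Frobenius norm `‖A‖_F = √(tr(Aᴴ A))` of a complex matrix (as a real number). -/
noncomputable def froNorm {n : Type*} [Fintype n] (A : Matrix n n ℂ) : ℝ :=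
  Real.sqrt (((Aᴴ * A).trace).re)

namespace Matrix.IsHermitian

variable {n : Type*} [Fintype n] [DecidableEq n] {A : Matrix n n ℂ}

lemma trace_cfc (hA : A.IsHermitian) (f : ℝ → ℝ) :
    (cfc f A).trace = ∑ i, (f (hA.eigenvalues i) : ℂ) := by
  rw [hA.cfc_eq, IsHermitian.cfc, Unitary.conjStarAlgAut_apply, trace_mul_cycle,
    Unitary.coe_star_mul_self, one_mul, trace_diagonal]
  rfl

lemma conjTranspose_mul_self_eq_cfc_sq (hA : A.IsHermitian) :
    Aᴴ * A = cfc (· ^ 2 : ℝ → ℝ) A := by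
  rw [cfc_pow_id A 2 hA.isSelfAdjoint, hA.eq, sq]

end Matrix.IsHermitian

section TraceNorm

variable {n : Type*} [Fintype n] [DecidableEq n]

lemma traceNorm_eq_re_trace_cfc_sqrt (A : Matrix n n ℂ) :
    traceNorm A = (cfc Real.sqrt (Aᴴ * A)).trace.re := by
  rw [(posSemidef_conjTranspose_mul_self A).1.cfc_eq]
  rfl

lemma traceNorm_eq_sum_abs_eigenvalues {A : Matrix n n ℂ} (hA : A.IsHermitian) :
    traceNorm A = ∑ i, |hA.eigenvalues i| := by
  rw [traceNorm_eq_re_trace_cfc_sqrt, hA.conjTranspose_mul_self_eq_cfc_sq,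
    ← cfc_comp' Real.sqrt (· ^ 2) A, hA.trace_cfc,
    ← Complex.ofReal_sum, Complex.ofReal_re]
  simp only [Real.sqrt_sq_eq_abs]

lemma froNorm_eq_sqrt_sum_sq_eigenvalues {A : Matrix n n ℂ} (hA : A.IsHermitian) :
    froNorm A = √(∑ i, hA.eigenvalues i ^ 2) := by
  rw [froNorm, hA.conjTranspose_mul_self_eq_cfc_sq, hA.trace_cfc,
    ← Complex.ofReal_sum, Complex.ofReal_re]

end TraceNorm

section SumOfSquares

variable {ι : Type*} [Fintype ι] (x : ι → ℝ)

lemma sq_eq_sq_posPart_add_sq_negPart (a : ℝ) : a ^ 2 = a⁺ ^ 2 + a⁻ ^ 2 := by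
  rcases le_total 0 a with h | h
  · rw [posPart_eq_self.2 h, negPart_eq_zero.2 h]; ring
  · rw [posPart_eq_zero.2 h, negPart_eq_neg.2 h]; ring

lemma sum_sq_le_sq_sum_posPart_add_sq_sum_negPart :
    ∑ i, x i ^ 2 ≤ (∑ i, (x i)⁺) ^ 2 + (∑ i, (x i)⁻) ^ 2 := by
  simp only [sq_eq_sq_posPart_add_sq_negPart (x _), Finset.sum_add_distrib]
  gcongr <;> exact Finset.sum_sq_le_sq_sum_of_nonneg fun i _ => by positivity

lemma sqrt_sum_sq_le_sum_abs : √(∑ i, x i ^ 2) ≤ ∑ i, |x i| := by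
  rw [Real.sqrt_le_left (by positivity)]
  simpa only [sq_abs] using
    Finset.sum_sq_le_sq_sum_of_nonneg (s := .univ) (f := fun i => |x i|) fun i _ => abs_nonneg _

lemma two_mul_sum_sq_le_sq_sum_abs_of_sum_eq_zero (hx : ∑ i, x i = 0) :
    2 * ∑ i, x i ^ 2 ≤ (∑ i, |x i|) ^ 2 := by
  have hpos_eq_neg : ∑ i, (x i)⁺ = ∑ i, (x i)⁻ := by
    rw [← sub_eq_zero, ← Finset.sum_sub_distrib, ← hx]
    simp only [posPart_sub_negPart]
  have habs : ∑ i, |x i| = ∑ i, (x i)⁺ + ∑ i, (x i)⁻ := by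
    rw [← Finset.sum_add_distrib]
    simp only [posPart_add_negPart]
  have := sum_sq_le_sq_sum_posPart_add_sq_sum_negPart x
  rw [habs, ← hpos_eq_neg] at *
  nlinarith

lemma sqrt_sum_sq_eq_sum_abs_iff_of_sum_eq_zero (hx : ∑ i, x i = 0) :
    √(∑ i, x i ^ 2) = ∑ i, |x i| ↔ x = 0 := by
  refine ⟨fun h => ?_, by rintro rfl; simp⟩
  have hsq : (∑ i, |x i|) ^ 2 = ∑ i, x i ^ 2 := by
    rw [← h, Real.sq_sqrt (by positivity)]
  have hzero : ∑ i, |x i| = 0 := by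
    nlinarith [two_mul_sum_sq_le_sq_sum_abs_of_sum_eq_zero x hx]
  funext i
  simpa using (Finset.sum_eq_zero_iff_of_nonneg fun i _ => abs_nonneg (x i)).1 hzero i

end SumOfSquares

theorem stmt_10_general (d : ℕ)
    (ρ : Matrix (Fin d) (Fin d) ℂ) (hρ : ρ.IsHermitian)
    (A : Matrix (Fin d) (Fin d) ℂ) (hA : A = ρ - ρᵀ) :
    froNorm A ≤ traceNorm A ∧
      (traceNorm A = froNorm A ↔ ρᵀ = ρ) ∧
      (ρᵀ = ρ ↔ A = 0) := by
  have hA_zero : ρᵀ = ρ ↔ A = 0 := by rw [hA, sub_eq_zero, eq_comm]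
  have hAh : A.IsHermitian := hA ▸ hρ.sub hρ.transpose
  have hsum : ∑ i, hAh.eigenvalues i = 0 := by
    have htrace : A.trace = 0 := by rw [hA, trace_sub, trace_transpose, sub_self]
    rwa [hAh.trace_eq_sum_eigenvalues, ← RCLike.ofReal_sum, RCLike.ofReal_eq_zero] at htrace
  rw [traceNorm_eq_sum_abs_eigenvalues hAh, froNorm_eq_sqrt_sum_sq_eigenvalues hAh, eq_comm,
    sqrt_sum_sq_eq_sum_abs_iff_of_sum_eq_zero _ hsum, hAh.eigenvalues_eq_zero_iff, hA_zero]
  exact ⟨sqrt_sum_sq_le_sum_abs _, Iff.rfl, Iff.rfl⟩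

/-- for Hermitian `ρ` and `A = ρ − ρᵀ`, one has `‖A‖_F ≤ ‖A‖_tr`, with
equality iff `ρᵀ = ρ` (equivalently `A = 0`). -/
theorem stmt_10 (d : ℕ) (hd : 1 ≤ d)
    (ρ : Matrix (Fin d) (Fin d) ℂ) (hρ : ρ.IsHermitian)
    (A : Matrix (Fin d) (Fin d) ℂ) (hA : A = ρ - ρᵀ) :
    froNorm A ≤ traceNorm A ∧
      (traceNorm A = froNorm A ↔ ρᵀ = ρ) ∧
      (ρᵀ = ρ ↔ A = 0) :=
  stmt_10_general d ρ hρ A hA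
end

section
/- Let L ≥ 1, let T be a real L×L matrix, and let σ_L denote the uniform probability measure on the unit sphere S^{L−1} ⊂ ℝ^L. Then ∬ ⟨u, T v⟩⁴ dσ_L(u) dσ_L(v) = (3/(L²(L+2)²)) · ( 2·tr((TᵀT)²) + (tr(TᵀT))² ). Equivalently, with τ₁, …, τ_L the singular values of T, the left-hand side equals W·(2·Σ_j τ_j⁴ + (Σ_j τ_j²)²), where W = 3/(L²(L+2)²). -/
/-!
Integrating out `v` first, `∫ ⟪u, T v⟫⁴ dσ(v) = ∫ ⟪Tᵀ u, v⟫⁴ dσ(v)` is a multiple of `‖Tᵀ u‖⁴`,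
and `‖Tᵀ u‖⁴ = (∑ⱼ ⟪cⱼ, u⟫²)²` for the columns `cⱼ` of `T`; by polarization the `u`-integral is
again a combination of fourth moments `∫ ⟪w, u⟫⁴ dσ(u) = 3 ‖w‖⁴ / (L (L + 2))`, and the Gram
matrix of the columns is `TᵀT`.

The fourth moment comes from the Gaussian: in polar coordinates the sphere average of a function
homogeneous of degree `d` is its average against `exp (-‖x‖²)` times `J (L - 1) / J (L - 1 + d)`,
where `J k = ∫₀^∞ rᵏ exp (-r²) dr = Γ ((k + 1) / 2) / 2`. A reflection taking `w` to `‖w‖ eᵢ`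
turns the Gaussian average of `⟪w, x⟫⁴` into `‖w‖⁴` times that of `xᵢ⁴`, which is `3 / 4`.
-/

open MeasureTheory Metric Matrix
open scoped RealInnerProductSpace

/-- The uniform (normalized surface) probability measure on the unit sphere of
`EuclideanSpace ℝ (Fin L)`. -/
noncomputable def sphereUniform (L : ℕ) :
    Measure (sphere (0 : EuclideanSpace ℝ (Fin L)) 1) :=
  ((volume : Measure (EuclideanSpace ℝ (Fin L))).toSphere Set.univ)⁻¹ •
    (volume : Measure (EuclideanSpace ℝ (Fin L))).toSphere

open Real Set

noncomputable def radialGaussianMoment (k : ℕ) : ℝ := ∫ r in Ioi (0 : ℝ), r ^ k * exp (-r ^ 2)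

lemma radialGaussianMoment_eq_Gamma (k : ℕ) :
    radialGaussianMoment k = Gamma ((k + 1) / 2) / 2 := by
  have h := integral_rpow_mul_exp_neg_rpow (p := 2) (q := k) two_pos
    (by linarith [k.cast_nonneg (α := ℝ)])
  simp only [rpow_natCast, rpow_two] at h
  rw [radialGaussianMoment, h]
  ring

lemma radialGaussianMoment_pos (k : ℕ) : 0 < radialGaussianMoment k := by
  rw [radialGaussianMoment_eq_Gamma]
  exact half_pos (Gamma_pos_of_pos (by positivity))

lemma radialGaussianMoment_add_two (k : ℕ) :
    radialGaussianMoment (k + 2) = (k + 1) / 2 * radialGaussianMoment k := by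
  rw [radialGaussianMoment_eq_Gamma, radialGaussianMoment_eq_Gamma, ← mul_div_assoc,
    ← Gamma_add_one (by positivity)]
  push_cast
  ring_nf

lemma integral_pow_mul_exp_neg_sq_of_even {k : ℕ} (hk : Even k) :
    ∫ t : ℝ, t ^ k * exp (-t ^ 2) = 2 * radialGaussianMoment k := by
  have h := integral_comp_abs (f := fun t => t ^ k * exp (-t ^ 2))
  simp only [hk.pow_abs, sq_abs] at h
  exact h

lemma integral_pow_four_mul_exp_neg_sq :
    ∫ t : ℝ, t ^ 4 * exp (-t ^ 2) = 3 / 4 * ∫ t : ℝ, exp (-t ^ 2) := by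
  have h0 := integral_pow_mul_exp_neg_sq_of_even Even.zero
  simp only [pow_zero, one_mul] at h0
  rw [h0, integral_pow_mul_exp_neg_sq_of_even (by decide), radialGaussianMoment_add_two 2,
    radialGaussianMoment_add_two 0]
  norm_num
  ring

lemma integral_volumeIoiPow (n : ℕ) (f : ℝ → ℝ) :
    ∫ r : Ioi (0 : ℝ), f r ∂(Measure.volumeIoiPow n) = ∫ r in Ioi (0 : ℝ), r ^ n * f r := by
  rw [Measure.volumeIoiPow, integral_withDensity_eq_integral_toReal_smul
      (by fun_prop) (Filter.Eventually.of_forall fun _ => ENNReal.ofReal_lt_top),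
    integral_subtype_comap measurableSet_Ioi (fun r => (ENNReal.ofReal (r ^ n)).toReal • f r)]
  refine setIntegral_congr_fun measurableSet_Ioi fun r hr => ?_
  rw [ENNReal.toReal_ofReal (pow_nonneg (le_of_lt hr) n), smul_eq_mul]

section Polar

variable {E : Type*} [NormedAddCommGroup E] [NormedSpace ℝ E] [FiniteDimensional ℝ E]
  [MeasurableSpace E] [BorelSpace E] [Nontrivial E] (μ : Measure E) [μ.IsAddHaarMeasure]

lemma integral_toSphere_mul_integral_Ioi {d : ℕ} {H : E → ℝ}
    (hH : ∀ r : ℝ, 0 < r → ∀ x, H (r • x) = r ^ d * H x) (g : ℝ → ℝ) :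
    (∫ u : sphere (0 : E) 1, H u ∂μ.toSphere) *
        ∫ r in Ioi (0 : ℝ), r ^ (Module.finrank ℝ E - 1 + d) * g r =
      ∫ x, H x * g ‖x‖ ∂μ := by
  have hpolar := μ.measurePreserving_homeomorphUnitSphereProd.integral_comp
    (Homeomorph.measurableEmbedding _)
    (fun z : sphere (0 : E) 1 × Ioi (0 : ℝ) => H z.1 * ((z.2 : ℝ) ^ d * g z.2))
  have hscale : ∀ x : ({0}ᶜ : Set E),
      H (homeomorphUnitSphereProd E x).1 * (((homeomorphUnitSphereProd E x).2 : ℝ) ^ d *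
        g (homeomorphUnitSphereProd E x).2) = H x * g ‖(x : E)‖ := by
    intro x
    have hx : 0 < ‖(x : E)‖ := norm_pos_iff.2 x.2
    simp only [homeomorphUnitSphereProd_apply_fst_coe, homeomorphUnitSphereProd_apply_snd_coe]
    rw [hH _ (inv_pos.2 hx), inv_pow]
    field_simp
  have hradial : ∫ r in Ioi (0 : ℝ), r ^ (Module.finrank ℝ E - 1 + d) * g r =
      ∫ r : Ioi (0 : ℝ), (r : ℝ) ^ d * g r ∂(Measure.volumeIoiPow (Module.finrank ℝ E - 1)) := by
    rw [integral_volumeIoiPow _ fun r => r ^ d * g r]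
    simp_rw [pow_add, mul_assoc]
  rw [hradial, ← integral_prod_mul, ← hpolar, integral_congr_ae (.of_forall hscale),
    integral_subtype_comap (measurableSet_singleton 0).compl fun x => H x * g ‖x‖,
    restrict_compl_singleton]

lemma integral_normalized_toSphere_of_homogeneous {d : ℕ} {H : E → ℝ}
    (hH : ∀ r : ℝ, 0 < r → ∀ x, H (r • x) = r ^ d * H x) :
    ∫ u, H u ∂((μ.toSphere univ)⁻¹ • μ.toSphere) =
      radialGaussianMoment (Module.finrank ℝ E - 1) /
          radialGaussianMoment (Module.finrank ℝ E - 1 + d) *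
        ((∫ x, H x * exp (-‖x‖ ^ 2) ∂μ) / ∫ x, exp (-‖x‖ ^ 2) ∂μ) := by
  have hmass := integral_toSphere_mul_integral_Ioi μ (d := 0) (H := fun _ => 1) (by simp)
    fun r => exp (-r ^ 2)
  have hH' := integral_toSphere_mul_integral_Ioi μ hH fun r => exp (-r ^ 2)
  simp only [integral_const, smul_eq_mul, mul_one, one_mul, add_zero] at hmass
  rw [← radialGaussianMoment] at hmass hH'
  have hmass_pos : 0 < μ.toSphere.real univ := by
    rw [measureReal_def]
    exact ENNReal.toReal_pos (Measure.measure_univ_ne_zero.2 (Measure.toSphere_ne_zero μ))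
      (measure_ne_top _ _)
  have h0 := radialGaussianMoment_pos (Module.finrank ℝ E - 1)
  have hd := radialGaussianMoment_pos (Module.finrank ℝ E - 1 + d)
  rw [integral_smul_measure, ENNReal.toReal_inv, ← measureReal_def, ← hmass, ← hH', smul_eq_mul]
  field_simp

end Polar

lemma integral_comp_inner_norm {E : Type*} [NormedAddCommGroup E] [InnerProductSpace ℝ E]
    [FiniteDimensional ℝ E] [MeasurableSpace E] [BorelSpace E]
    (a e : E) (he : ‖e‖ = 1) (F : ℝ → ℝ → ℝ) :
    ∫ x, F ⟪a, x⟫ ‖x‖ = ∫ x, F (‖a‖ * ⟪e, x⟫) ‖x‖ := by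
  set Q := Submodule.reflection (ℝ ∙ (a - ‖a‖ • e))ᗮ
  have hQa : Q a = ‖a‖ • e := Submodule.reflection_sub (by rw [norm_smul, he, norm_norm, mul_one])
  conv_rhs => rw [← Q.measurePreserving.integral_comp Q.toHomeomorph.measurableEmbedding]
  congr! 2 with x
  rw [LinearIsometryEquiv.norm_map, ← real_inner_smul_left, ← hQa,
    LinearIsometryEquiv.inner_map_map]

section Coordinates

variable {ι : Type*} [Fintype ι]

lemma integral_euclideanSpace_prod (f : ι → ℝ → ℝ) :
    ∫ x : EuclideanSpace ℝ ι, ∏ i, f i (x i) = ∏ i, ∫ t, f i t := by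
  rw [← (PiLp.volume_preserving_toLp ι).integral_comp
    (MeasurableEquiv.toLp 2 (ι → ℝ)).measurableEmbedding]
  exact integral_fintype_prod_eq_prod f

lemma exp_neg_norm_sq_eq_prod (x : EuclideanSpace ℝ ι) :
    exp (-‖x‖ ^ 2) = ∏ i, exp (-x i ^ 2) := by
  rw [EuclideanSpace.real_norm_sq_eq, ← exp_sum, Finset.sum_neg_distrib]

lemma integral_exp_neg_norm_sq_eq_pow :
    ∫ x : EuclideanSpace ℝ ι, exp (-‖x‖ ^ 2) = (∫ t : ℝ, exp (-t ^ 2)) ^ Fintype.card ι := by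
  simp_rw [exp_neg_norm_sq_eq_prod]
  rw [integral_euclideanSpace_prod fun _ t => exp (-t ^ 2), Finset.prod_const, Finset.card_univ]

lemma integral_exp_neg_norm_sq_pos : 0 < ∫ x : EuclideanSpace ℝ ι, exp (-‖x‖ ^ 2) := by
  have h := integral_gaussian 1
  simp only [neg_mul, one_mul, div_one] at h
  rw [integral_exp_neg_norm_sq_eq_pow, h]
  positivity

lemma integral_coord_pow_four_mul_exp_neg_norm_sq [DecidableEq ι] (i : ι) :
    ∫ x : EuclideanSpace ℝ ι, x i ^ 4 * exp (-‖x‖ ^ 2) =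
      3 / 4 * ∫ x : EuclideanSpace ℝ ι, exp (-‖x‖ ^ 2) := by
  set f : ι → ℝ → ℝ := fun m t => t ^ (if m = i then 4 else 0) * exp (-t ^ 2)
  have hprod (x : EuclideanSpace ℝ ι) : x i ^ 4 * exp (-‖x‖ ^ 2) = ∏ m, f m (x m) := by
    rw [exp_neg_norm_sq_eq_prod, Finset.prod_mul_distrib]
    simp only [pow_ite, pow_zero, Finset.prod_ite_eq', Finset.mem_univ, if_true]
  have hfactor (m : ι) :
      ∫ t, f m t = (if m = i then 3 / 4 else 1) * ∫ t : ℝ, exp (-t ^ 2) := by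
    split_ifs with h
    · simp only [f, h, if_true, integral_pow_four_mul_exp_neg_sq]
    · simp only [f, h, if_false, pow_zero, one_mul]
  simp_rw [hprod]
  rw [integral_euclideanSpace_prod, Finset.prod_congr rfl fun m _ => hfactor m,
    Finset.prod_mul_distrib, Finset.prod_ite_eq', integral_exp_neg_norm_sq_eq_pow]
  simp

lemma integral_inner_pow_four_mul_exp_neg_norm_sq [Nonempty ι] (a : EuclideanSpace ℝ ι) :
    ∫ x, ⟪a, x⟫ ^ 4 * exp (-‖x‖ ^ 2) =
      3 / 4 * ‖a‖ ^ 4 * ∫ x : EuclideanSpace ℝ ι, exp (-‖x‖ ^ 2) := by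
  classical
  obtain ⟨i⟩ := ‹Nonempty ι›
  rw [integral_comp_inner_norm a (EuclideanSpace.single i 1) (by simp)
    fun s r => s ^ 4 * exp (-r ^ 2)]
  simp_rw [EuclideanSpace.inner_single_left, map_one, one_mul, mul_pow, mul_assoc]
  rw [integral_const_mul, integral_coord_pow_four_mul_exp_neg_norm_sq]
  ring

end Coordinates

lemma integrable_sphereUniform_of_continuous {L : ℕ} (hL : 1 ≤ L)
    {f : sphere (0 : EuclideanSpace ℝ (Fin L)) 1 → ℝ} (hf : Continuous f) :
    Integrable f (sphereUniform L) := by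
  obtain ⟨n, rfl⟩ : ∃ n, L = n + 1 := ⟨L - 1, by omega⟩
  have : NeZero (volume : Measure (EuclideanSpace ℝ (Fin (n + 1)))).toSphere :=
    ⟨Measure.toSphere_ne_zero _⟩
  have : IsProbabilityMeasure (sphereUniform (n + 1)) := isProbabilityMeasureSMul
  exact hf.integrable_of_hasCompactSupport (.of_compactSpace f)

lemma integral_inner_pow_four_sphereUniform {L : ℕ} (hL : 1 ≤ L)
    (a : EuclideanSpace ℝ (Fin L)) :
    ∫ u, ⟪a, (u : EuclideanSpace ℝ (Fin L))⟫ ^ 4 ∂sphereUniform L =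
      3 * ‖a‖ ^ 4 / (L * (L + 2)) := by
  obtain ⟨n, rfl⟩ : ∃ n, L = n + 1 := ⟨L - 1, by omega⟩
  have hhom (r : ℝ) (_ : 0 < r) (x : EuclideanSpace ℝ (Fin (n + 1))) :
      ⟪a, r • x⟫ ^ 4 = r ^ 4 * ⟪a, x⟫ ^ 4 := by
    rw [inner_smul_right, mul_pow]
  have hJ : radialGaussianMoment (n + 4) =
      (n + 3) / 2 * ((n + 1) / 2) * radialGaussianMoment n := by
    rw [radialGaussianMoment_add_two (n + 2), radialGaussianMoment_add_two n]
    push_cast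
    ring
  rw [sphereUniform, integral_normalized_toSphere_of_homogeneous (H := fun x => ⟪a, x⟫ ^ 4) _ hhom,
    integral_inner_pow_four_mul_exp_neg_norm_sq, finrank_euclideanSpace_fin, Nat.add_sub_cancel,
    hJ]
  have := radialGaussianMoment_pos n
  have := integral_exp_neg_norm_sq_pos (ι := Fin (n + 1))
  push_cast
  field_simp
  ring

lemma integral_inner_sq_mul_inner_sq_sphereUniform {L : ℕ} (hL : 1 ≤ L)
    (a b : EuclideanSpace ℝ (Fin L)) :
    ∫ u, ⟪a, (u : EuclideanSpace ℝ (Fin L))⟫ ^ 2 * ⟪b, (u : EuclideanSpace ℝ (Fin L))⟫ ^ 2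
        ∂sphereUniform L =
      (‖a‖ ^ 2 * ‖b‖ ^ 2 + 2 * ⟪a, b⟫ ^ 2) / (L * (L + 2)) := by
  have hpolar (u : EuclideanSpace ℝ (Fin L)) : ⟪a, u⟫ ^ 2 * ⟪b, u⟫ ^ 2 =
      (⟪a + b, u⟫ ^ 4 + ⟪a - b, u⟫ ^ 4 - 2 * ⟪a, u⟫ ^ 4 - 2 * ⟪b, u⟫ ^ 4) / 12 := by
    rw [inner_add_left, inner_sub_left]
    ring
  have hadd : ‖a + b‖ ^ 4 = (‖a‖ ^ 2 + 2 * ⟪a, b⟫ + ‖b‖ ^ 2) ^ 2 := by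
    rw [← norm_add_sq_real]; ring
  have hsub : ‖a - b‖ ^ 4 = (‖a‖ ^ 2 - 2 * ⟪a, b⟫ + ‖b‖ ^ 2) ^ 2 := by
    rw [← norm_sub_sq_real]; ring
  simp_rw [hpolar]
  rw [integral_div, integral_sub, integral_sub, integral_add, integral_const_mul,
    integral_const_mul]
  · simp only [integral_inner_pow_four_sphereUniform hL, hadd, hsub]
    field_simp
    ring
  all_goals exact integrable_sphereUniform_of_continuous hL (by fun_prop)

lemma integral_sum_inner_sq_sq_sphereUniform {L : ℕ} (hL : 1 ≤ L) {κ : Type*} [Fintype κ]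
    (c : κ → EuclideanSpace ℝ (Fin L)) :
    ∫ u, (∑ j, ⟪c j, (u : EuclideanSpace ℝ (Fin L))⟫ ^ 2) ^ 2 ∂sphereUniform L =
      ((∑ j, ‖c j‖ ^ 2) ^ 2 + 2 * ∑ j, ∑ k, ⟪c j, c k⟫ ^ 2) / (L * (L + 2)) := by
  have hint (j k : κ) : Integrable (fun u : sphere (0 : EuclideanSpace ℝ (Fin L)) 1 =>
      ⟪c j, (u : EuclideanSpace ℝ (Fin L))⟫ ^ 2 * ⟪c k, (u : EuclideanSpace ℝ (Fin L))⟫ ^ 2)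
      (sphereUniform L) :=
    integrable_sphereUniform_of_continuous hL (by fun_prop)
  simp_rw [sq (∑ j, _), Finset.sum_mul_sum]
  rw [integral_finsetSum _ fun j _ => integrable_finsetSum _ fun k _ => hint j k,
    Finset.sum_congr rfl fun j _ => integral_finsetSum _ fun k _ => hint j k]
  simp_rw [integral_inner_sq_mul_inner_sq_sphereUniform hL, ← Finset.sum_div,
    Finset.sum_add_distrib, ← Finset.mul_sum]

section Matrix

variable {n : Type*} [Fintype n] (T : Matrix n n ℝ)

lemma inner_toLp_transpose (j k : n) :
    ⟪WithLp.toLp 2 (Tᵀ j), WithLp.toLp 2 (Tᵀ k)⟫ = (Tᵀ * T) j k := by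
  simp [PiLp.inner_apply, mul_apply, mul_comm]

variable [DecidableEq n]

lemma inner_toEuclideanLin_eq_inner_transpose (u v : EuclideanSpace ℝ n) :
    ⟪u, toEuclideanLin T v⟫ = ⟪toEuclideanLin Tᵀ u, v⟫ := by
  rw [← conjTranspose_eq_transpose_of_trivial, toEuclideanLin_conjTranspose_eq_adjoint,
    LinearMap.adjoint_inner_left]

lemma toEuclideanLin_transpose_apply (u : EuclideanSpace ℝ n) (j : n) :
    toEuclideanLin Tᵀ u j = ⟪WithLp.toLp 2 (Tᵀ j), u⟫ := by
  simp [toLpLin_apply, mulVec, dotProduct, PiLp.inner_apply, mul_comm]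

end Matrix

/-- the fourth moment of `⟨u, Tv⟩` over the uniform sphere measures equals
`(3/(L²(L+2)²))·(2·tr((TᵀT)²) + (tr(TᵀT))²)`. -/
theorem stmt_14 (L : ℕ) (hL : 1 ≤ L) (T : Matrix (Fin L) (Fin L) ℝ) :
    (∫ u, ∫ v,
        ⟪((u : Metric.sphere (0 : EuclideanSpace ℝ (Fin L)) 1) : EuclideanSpace ℝ (Fin L)),
          Matrix.toEuclideanLin T ((v : Metric.sphere (0 : EuclideanSpace ℝ (Fin L)) 1) :
            EuclideanSpace ℝ (Fin L))⟫ ^ 4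
        ∂(sphereUniform L) ∂(sphereUniform L)) =
      (3 / ((L : ℝ) ^ 2 * ((L : ℝ) + 2) ^ 2)) *
        (2 * ((Tᵀ * T) * (Tᵀ * T)).trace + ((Tᵀ * T).trace) ^ 2) := by
  set c : Fin L → EuclideanSpace ℝ (Fin L) := fun j => WithLp.toLp 2 (Tᵀ j)
  have hnorm (u : EuclideanSpace ℝ (Fin L)) :
      ‖toEuclideanLin Tᵀ u‖ ^ 4 = (∑ j, ⟪c j, u⟫ ^ 2) ^ 2 := by
    simp_rw [show 4 = 2 * 2 from rfl, pow_mul, EuclideanSpace.real_norm_sq_eq,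
      toEuclideanLin_transpose_apply, c]
  have htrace : ∑ j, ‖c j‖ ^ 2 = (Tᵀ * T).trace := by
    simp_rw [← real_inner_self_eq_norm_sq, c, inner_toLp_transpose]; rfl
  have htrace_sq : ∑ j, ∑ k, ⟪c j, c k⟫ ^ 2 = ((Tᵀ * T) * (Tᵀ * T)).trace := by
    have hsq (j k : Fin L) : ⟪c j, c k⟫ ^ 2 = (Tᵀ * T) j k * (Tᵀ * T) k j := by
      rw [sq]
      nth_rewrite 2 [real_inner_comm]
      exact congrArg₂ (· * ·) (inner_toLp_transpose T j k) (inner_toLp_transpose T k j)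
    simp_rw [hsq]
    generalize Tᵀ * T = G
    simp [trace, mul_apply]
  simp_rw [inner_toEuclideanLin_eq_inner_transpose, integral_inner_pow_four_sphereUniform hL,
    hnorm, integral_div, integral_const_mul, integral_sum_inner_sq_sq_sphereUniform hL, htrace,
    htrace_sq]
  field_simp
  ring
end

section
/- Let d ≥ 2, L = (d−1)(d+2)/2, W = 3/(L²(L+2)²), and let r be an integer with 1 ≤ r ≤ d; set s = r·d − 1. Let τ : Fin L → ℝ satisfy 0 ≤ τ_j ≤ d−1 for all j and Σ_j τ_j ≤ s, and set y = (Σ_j τ_j²)/L² and Q₄ = W·(2·Σ_j τ_j⁴ + L⁴·y²). Then: (a) if 0 ≤ y ≤ s²/L³, then Q₄ ≥ W·L³·y²·(2+L); and (b) for every integer n with 1 ≤ n ≤ L−1, if s²/(L²(n+1)) ≤ y < s²/(L²·n), then Q₄ ≥ 2W·f/(n+1)⁴ + W·L⁴·y², where B = √(n(n+1)L²y − n·s²) and f = (B − s)⁴ + (B + n·s)⁴/n³. -/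
/- Auxiliary lemmas for STATEMENT 15. -/


lemma comp_update (g : ℝ → ℝ) {m : ℕ} (x : Fin m → ℝ) (i : Fin m) (a : ℝ) :
    (fun t => g (Function.update x i a t)) = Function.update (fun t => g (x t)) i (g a) := by
  funext t
  by_cases ht : t = i
  · subst ht; simp
  · simp [Function.update_of_ne ht]

lemma sum_update1 {m : ℕ} (x : Fin m → ℝ) (g : ℝ → ℝ) (i : Fin m) (a : ℝ) :
    ∑ t, g (Function.update x i a t) = ∑ t, g (x t) - g (x i) + g a := by
  rw [show (∑ t, g (Function.update x i a t)) = ∑ t, Function.update (fun t => g (x t)) i (g a) t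
      from by rw [← comp_update]]
  rw [Finset.sum_update_of_mem (Finset.mem_univ i)]
  rw [← Finset.add_sum_erase Finset.univ _ (Finset.mem_univ i), Finset.sdiff_singleton_eq_erase]
  ring

lemma sum_update2 {m : ℕ} (x : Fin m → ℝ) (g : ℝ → ℝ) {i j : Fin m} (hij : i ≠ j) (a b : ℝ) :
    ∑ t, g (Function.update (Function.update x i a) j b t)
      = ∑ t, g (x t) - g (x i) - g (x j) + g a + g b := by
  rw [sum_update1, sum_update1, Function.update_of_ne (Ne.symm hij)]
  ring

lemma sum_update3 {m : ℕ} (x : Fin m → ℝ) (g : ℝ → ℝ) {i j k : Fin m}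
    (hij : i ≠ j) (hik : i ≠ k) (hjk : j ≠ k) (a b c : ℝ) :
    ∑ t, g (Function.update (Function.update (Function.update x i a) j b) k c t)
      = ∑ t, g (x t) - g (x i) - g (x j) - g (x k) + g a + g b + g c := by
  rw [sum_update1, sum_update2 _ _ hij]
  rw [show (Function.update (Function.update x i a) j b k) = x k from by
    rw [Function.update_of_ne (Ne.symm hjk), Function.update_of_ne (Ne.symm hik)]]
  ring


lemma improve_pair (X Y δ : ℝ) (hX : 0 < X) (hY : 0 < Y) (hne : X ≠ Y) (hδ : 0 < δ) :
    ∃ v w : ℝ, 0 ≤ v ∧ 0 ≤ w ∧ v + w ≤ X + Y + δ ∧ v^2 + w^2 = X^2 + Y^2 ∧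
      v^4 + w^4 < X^4 + Y^4 := by
  set q : ℝ := X^2 + Y^2 with hq
  have hq0 : 0 < q := by positivity
  set σ0 : ℝ := X + Y with hσ0
  have hσ0pos : 0 < σ0 := by positivity
  have hσ0lt : σ0 < Real.sqrt (2*q) := by
    rw [show σ0 = Real.sqrt (σ0^2) from (Real.sqrt_sq hσ0pos.le).symm]
    apply Real.sqrt_lt_sqrt (by positivity)
    have : (X - Y)^2 > 0 := lt_of_le_of_ne (sq_nonneg _) (Ne.symm (pow_ne_zero 2 (sub_ne_zero.mpr hne)))
    nlinarith
  set σ' : ℝ := min (σ0 + δ) (Real.sqrt (2*q)) with hσ'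
  have hσ'gt : σ0 < σ' := lt_min (by linarith) hσ0lt
  have hσ'pos : 0 < σ' := lt_trans hσ0pos hσ'gt
  have hσ'le : σ'^2 ≤ 2*q := by
    have h1 : σ' ≤ Real.sqrt (2*q) := min_le_right _ _
    calc σ'^2 ≤ (Real.sqrt (2*q))^2 := by nlinarith [Real.sqrt_nonneg (2*q)]
    _ = 2*q := Real.sq_sqrt (by positivity)
  set E : ℝ := Real.sqrt (2*q - σ'^2) with hE
  have hE2 : E^2 = 2*q - σ'^2 := Real.sq_sqrt (by linarith)
  have hE0 : 0 ≤ E := Real.sqrt_nonneg _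
  have hq2 : q ≤ σ0^2 := by nlinarith [mul_pos hX hY]
  have hEσ : E ≤ σ' := by nlinarith
  refine ⟨(σ' + E)/2, (σ' - E)/2, by linarith, by linarith, ?_, ?_, ?_⟩
  · have : σ' ≤ σ0 + δ := min_le_left _ _
    linarith
  · linear_combination (1/2 : ℝ) * hE2
  · have hvw : (σ' + E)/2 * ((σ' - E)/2) = (σ'^2 - q)/2 := by
      linear_combination (-1/4 : ℝ) * hE2
    have hXY : 0 < X*Y := mul_pos hX hY
    have hgt : X*Y < (σ' + E)/2 * ((σ' - E)/2) := by
      rw [hvw]; nlinarith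
    have e1 : ((σ' + E)/2)^4 + ((σ' - E)/2)^4
        = (((σ' + E)/2)^2 + ((σ' - E)/2)^2)^2 - 2*((σ' + E)/2 * ((σ' - E)/2))^2 := by ring
    have e2 : X^4 + Y^4 = (X^2 + Y^2)^2 - 2*(X*Y)^2 := by ring
    have hsq : ((σ' + E)/2)^2 + ((σ' - E)/2)^2 = q := by linear_combination (1/2 : ℝ) * hE2
    rw [e1, e2, hsq, ← hq]
    nlinarith


set_option maxHeartbeats 1000000 in
lemma improve_triple (X Y Z : ℝ) (hX : 0 < X) (hXY : X ≤ Y) (hYZ : Y < Z) :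
    ∃ u v w : ℝ, 0 ≤ u ∧ 0 ≤ v ∧ 0 ≤ w ∧ u + v + w = X + Y + Z ∧
      u^2 + v^2 + w^2 = X^2 + Y^2 + Z^2 ∧ u^4 + v^4 + w^4 < X^4 + Y^4 + Z^4 := by
  have hY : 0 < Y := lt_of_lt_of_le hX hXY
  have hZ : 0 < Z := lt_trans hY hYZ
  by_cases hcase : 2*(X^2+Y^2+Z^2) ≤ (X+Y+Z)^2
  · -- Case A
    have hD0 : 0 ≤ (X+Y+Z)^2 - 3*(X*Y+Y*Z+Z*X) := by
      nlinarith [sq_nonneg (X-Y), sq_nonneg (Y-Z), sq_nonneg (Z-X)]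
    obtain ⟨R, hR0, hR2⟩ : ∃ R : ℝ, 0 ≤ R ∧ R^2 = (X+Y+Z)^2 - 3*(X*Y+Y*Z+Z*X) :=
      ⟨Real.sqrt _, Real.sqrt_nonneg _, Real.sq_sqrt hD0⟩
    have hσ2R : 2*R ≤ X+Y+Z := by nlinarith
    -- quadratic factorization instances
    have hfY : (Y - (X+Y+Z-R)/3)*(Y - (X+Y+Z+R)/3) = (Y - X)*(Y - Z)/3 := by
      linear_combination (-1/9 : ℝ) * hR2
    have hfZ : (Z - (X+Y+Z-R)/3)*(Z - (X+Y+Z+R)/3) = (Z - X)*(Z - Y)/3 := by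
      linear_combination (-1/9 : ℝ) * hR2
    have hYv : Y ≤ (X+Y+Z+R)/3 := by nlinarith
    have hαY : (X+Y+Z-R)/3 ≤ Y := by nlinarith
    have hvZ : (X+Y+Z+R)/3 < Z := by
      rcases lt_or_ge ((X+Y+Z+R)/3) Z with h | h
      · exact h
      · exfalso; nlinarith
    have hYv' : Y < (X+Y+Z+R)/3 := by
      rcases eq_or_lt_of_le hXY with hxy | hxy
      · have hRval : R = Z - Y := by
          have : R^2 = (Z-Y)^2 := by rw [hR2, ← hxy]; ring
          nlinarith
        rw [hRval, ← hxy]; linarith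
      · rcases eq_or_lt_of_le hYv with h | h
        · exfalso; rw [← h] at hfY; nlinarith
        · exact h
    refine ⟨(X+Y+Z-2*R)/3, (X+Y+Z+R)/3, (X+Y+Z+R)/3, by linarith, by linarith, by linarith,
      by ring, by linear_combination (2/3 : ℝ) * hR2, ?_⟩
    have hkey : X^4 + Y^4 + Z^4 - (((X+Y+Z-2*R)/3)^4 + ((X+Y+Z+R)/3)^4 + ((X+Y+Z+R)/3)^4)
        = 4*(X+Y+Z)*(((X+Y+Z+R)/3 - X)*((X+Y+Z+R)/3 - Y)*(Z - (X+Y+Z+R)/3)) := by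
      linear_combination ((-2/9 : ℝ)*R^2 + (4/9)*R*(X+Y+Z)
        - (2/3)*(X^2+Y^2+Z^2+X*Y+Y*Z+Z*X)) * hR2
    have hpos : 0 < ((X+Y+Z+R)/3 - X)*((X+Y+Z+R)/3 - Y)*(Z - (X+Y+Z+R)/3) := by
      apply mul_pos (mul_pos (by linarith) (by linarith)) (by linarith)
    have h4 := mul_pos (show (0:ℝ) < 4*(X+Y+Z) by linarith) hpos
    linarith [hkey]
  · -- Case B
    push_neg at hcase
    have hDB : 0 ≤ 2*(X^2+Y^2+Z^2) - (X+Y+Z)^2 := le_of_lt (by linarith)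
    obtain ⟨E, hE0, hE2⟩ : ∃ E : ℝ, 0 ≤ E ∧ E^2 = 2*(X^2+Y^2+Z^2) - (X+Y+Z)^2 :=
      ⟨Real.sqrt _, Real.sqrt_nonneg _, Real.sq_sqrt hDB⟩
    have hEσ : E ≤ X+Y+Z := by nlinarith [mul_pos hX hY, mul_pos hY hZ, mul_pos hX hZ]
    refine ⟨0, (X+Y+Z+E)/2, (X+Y+Z-E)/2, le_refl 0, by linarith, by linarith,
      by ring, by linear_combination (1/2 : ℝ) * hE2, ?_⟩
    have hkey : X^4 + Y^4 + Z^4 - ((0:ℝ)^4 + ((X+Y+Z+E)/2)^4 + ((X+Y+Z-E)/2)^4)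
        = 4*(X+Y+Z)*(X*Y*Z) := by
      linear_combination ((-1/8 : ℝ)*E^2 - (7/8)*(X^2+Y^2+Z^2)
        - (5/4)*(X*Y+Y*Z+Z*X)) * hE2
    have h4 := mul_pos (show (0:ℝ) < 4*(X+Y+Z) by linarith) (mul_pos (mul_pos hX hY) hZ)
    linarith [hkey]


lemma key_quartic (N B s : ℝ) (hN : 1 ≤ N) (hB0 : 0 ≤ B) (hBs : B ≤ s) :
    N^3*(B-s)^4 + (B+N*s)^4 ≤ (N+1)^2*(B^2+N*s^2)^2 := by
  have hid : (N+1)^2*(B^2+N*s^2)^2 - (N^3*(B-s)^4 + (B+N*s)^4)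
      = 2*N*B^2*(s-B)^2 + N^2*(s^2-B^2)^2 + N^3*(s-B)^2*(s^2+2*B*s-B^2) := by ring
  have h1 : 0 ≤ 2*N*B^2*(s-B)^2 := by positivity
  have h2 : 0 ≤ N^2*(s^2-B^2)^2 := by positivity
  have h3 : 0 ≤ N^3*(s-B)^2*(s^2+2*B*s-B^2) := by
    have hs0 : 0 ≤ s := le_trans hB0 hBs
    have : 0 ≤ s^2+2*B*s-B^2 := by nlinarith
    positivity
  linarith

lemma exists_minimizer (m : ℕ) (s P : ℝ) (x₀ : Fin m → ℝ)
    (h₀ : (∀ i, 0 ≤ x₀ i) ∧ (∑ i, x₀ i) ≤ s ∧ (∑ i, (x₀ i)^2) = P) :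
    ∃ y : Fin m → ℝ, ((∀ i, 0 ≤ y i) ∧ (∑ i, y i) ≤ s ∧ (∑ i, (y i)^2) = P) ∧
      ∀ z : Fin m → ℝ, ((∀ i, 0 ≤ z i) ∧ (∑ i, z i) ≤ s ∧ (∑ i, (z i)^2) = P) →
        (∑ i, (y i)^4) ≤ ∑ i, (z i)^4 := by
  set K : Set (Fin m → ℝ) :=
    {z | (∀ i, 0 ≤ z i) ∧ (∑ i, z i) ≤ s ∧ (∑ i, (z i)^2) = P} with hK
  have hclosed : IsClosed K := by
    have h1 : IsClosed {z : Fin m → ℝ | ∀ i, 0 ≤ z i} := by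
      have : {z : Fin m → ℝ | ∀ i, 0 ≤ z i} = ⋂ i, {z | 0 ≤ z i} := by
        ext z; simp
      rw [this]
      exact isClosed_iInter fun i => isClosed_le continuous_const (continuous_apply i)
    have h2 : IsClosed {z : Fin m → ℝ | (∑ i, z i) ≤ s} :=
      isClosed_le (continuous_finset_sum _ fun i _ => continuous_apply i) continuous_const
    have h3 : IsClosed {z : Fin m → ℝ | (∑ i, (z i)^2) = P} :=
      isClosed_eq (continuous_finset_sum _ fun i _ => (continuous_apply i).pow 2) continuous_const
    exact (h1.inter (h2.inter h3) : _)
  have hsub : K ⊆ Metric.closedBall 0 (Real.sqrt P) := by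
    intro z hz
    obtain ⟨hz0, hzs, hzP⟩ := hz
    rw [Metric.mem_closedBall, dist_zero_right]
    rw [pi_norm_le_iff_of_nonneg (Real.sqrt_nonneg P)]
    intro i
    rw [Real.norm_eq_abs, abs_of_nonneg (hz0 i)]
    have hP0 : 0 ≤ P := by
      rw [← hzP]; exact Finset.sum_nonneg fun j _ => sq_nonneg _
    rw [Real.le_sqrt (hz0 i) hP0, ← hzP]
    exact Finset.single_le_sum (fun j _ => sq_nonneg (z j)) (Finset.mem_univ i)
  have hcomp : IsCompact K :=
    IsCompact.of_isClosed_subset (isCompact_closedBall 0 (Real.sqrt P)) hclosed hsub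
  have hne : K.Nonempty := ⟨x₀, h₀⟩
  have hcont : ContinuousOn (fun z : Fin m → ℝ => ∑ i, (z i)^4) K :=
    (continuous_finset_sum _ fun i _ => (continuous_apply i).pow 4).continuousOn
  obtain ⟨y, hyK, hymin⟩ := hcomp.exists_isMinOn hne hcont
  exact ⟨y, hyK, fun z hz => hymin hz⟩

set_option maxHeartbeats 1000000 in
theorem key_min (m n : ℕ) (hn : 1 ≤ n) (s P : ℝ) (hs : 0 < s)
    (h1 : s^2/((n:ℝ)+1) ≤ P) (h2 : P ≤ s^2/(n:ℝ))
    (x : Fin m → ℝ) (hx0 : ∀ i, 0 ≤ x i) (hxs : (∑ i, x i) ≤ s)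
    (hxP : (∑ i, (x i)^2) = P) :
    ((n:ℝ)^3*(Real.sqrt ((n:ℝ)*((n:ℝ)+1)*P - (n:ℝ)*s^2) - s)^4
      + (Real.sqrt ((n:ℝ)*((n:ℝ)+1)*P - (n:ℝ)*s^2) + (n:ℝ)*s)^4)
      / ((n:ℝ)^3*((n:ℝ)+1)^4) ≤ ∑ i, (x i)^4 := by
  classical
  set N : ℝ := (n:ℝ) with hNdef
  clear_value N
  have hN1 : 1 ≤ N := by rw [hNdef]; exact_mod_cast hn
  have hN0 : 0 < N := by linarith
  have hP0 : 0 < P := lt_of_lt_of_le (by positivity) h1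
  have hs2 : s^2 ≤ (N+1)*P := by
    rw [div_le_iff₀ (by positivity)] at h1; linarith
  have hNP : N*P ≤ s^2 := by
    rw [le_div_iff₀ hN0] at h2; linarith
  have harg : 0 ≤ N*(N+1)*P - N*s^2 := by nlinarith
  have hB2 : (Real.sqrt (N*(N+1)*P - N*s^2))^2 = N*(N+1)*P - N*s^2 := Real.sq_sqrt harg
  have hB0 : 0 ≤ Real.sqrt (N*(N+1)*P - N*s^2) := Real.sqrt_nonneg _
  set B : ℝ := Real.sqrt (N*(N+1)*P - N*s^2) with hBdef
  clear_value B
  clear hBdef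
  have hBs : B ≤ s := by nlinarith
  obtain ⟨y, ⟨hy0, hys, hyP⟩, hmin⟩ := exists_minimizer m s P x ⟨hx0, hxs, hxP⟩
  have hgoal : (N^3*(B - s)^4 + (B + N*s)^4) / (N^3*(N+1)^4) ≤ ∑ i, (y i)^4 := by
    -- contradiction tools
    have NT : ∀ i j k : Fin m, i ≠ j → i ≠ k → j ≠ k →
        0 < y i → y i ≤ y j → y j < y k → False := by
      intro i j k hij hik hjk hyi hij2 hjk2
      obtain ⟨u, v, w, hu, hv, hw, hsum, hsq, hlt⟩ :=
        improve_triple (y i) (y j) (y k) hyi hij2 hjk2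
      set z := Function.update (Function.update (Function.update y i u) j v) k w with hzdef
      have hz0 : ∀ t, 0 ≤ z t := by
        intro t
        rw [hzdef, Function.update_apply, Function.update_apply, Function.update_apply]
        split_ifs <;> first | assumption | exact hy0 t
      have hzs : (∑ t, z t) ≤ s := by
        have := sum_update3 y (fun a => a) hij hik hjk u v w
        simp only [hzdef] at *
        rw [this]; linarith
      have hzP : (∑ t, (z t)^2) = P := by
        have := sum_update3 y (fun a => a^2) hij hik hjk u v w
        simp only [hzdef] at *
        rw [this]; linarith
      have h4 : (∑ t, (z t)^4) < ∑ t, (y t)^4 := by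
        have := sum_update3 y (fun a => a^4) hij hik hjk u v w
        simp only [hzdef] at *
        rw [this]; linarith
      exact absurd (hmin z ⟨hz0, hzs, hzP⟩) (by linarith)
    have NP : ∀ i j : Fin m, i ≠ j → 0 < y i → 0 < y j → y i ≠ y j →
        (∑ t, y t) < s → False := by
      intro i j hij hyi hyj hne hlt
      obtain ⟨v, w, hv, hw, hvw, hsq, hlt4⟩ :=
        improve_pair (y i) (y j) (s - ∑ t, y t) hyi hyj hne (by linarith)
      set z := Function.update (Function.update y i v) j w with hzdef
      have hz0 : ∀ t, 0 ≤ z t := by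
        intro t
        rw [hzdef, Function.update_apply, Function.update_apply]
        split_ifs <;> first | assumption | exact hy0 t
      have hzs : (∑ t, z t) ≤ s := by
        have := sum_update2 y (fun a => a) hij v w
        simp only [hzdef] at *
        rw [this]; linarith
      have hzP : (∑ t, (z t)^2) = P := by
        have := sum_update2 y (fun a => a^2) hij v w
        simp only [hzdef] at *
        rw [this]; linarith
      have h4 : (∑ t, (z t)^4) < ∑ t, (y t)^4 := by
        have := sum_update2 y (fun a => a^4) hij v w
        simp only [hzdef] at *
        rw [this]; linarith
      exact absurd (hmin z ⟨hz0, hzs, hzP⟩) (by linarith)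
    -- structure of the minimizer
    set A : Finset (Fin m) := Finset.univ.filter (fun i => 0 < y i) with hAdef
    have hyzero : ∀ i, i ∉ A → y i = 0 := by
      intro i hi
      rw [hAdef, Finset.mem_filter] at hi
      push_neg at hi
      have := hi (Finset.mem_univ i)
      linarith [hy0 i]
    have hsplit : ∀ g : ℝ → ℝ, g 0 = 0 → (∑ t, g (y t)) = ∑ t ∈ A, g (y t) := by
      intro g hg0
      rw [← Finset.sum_filter_add_sum_filter_not Finset.univ (fun i => 0 < y i) (fun t => g (y t))]
      rw [← hAdef]
      have : (∑ t ∈ Finset.univ.filter (fun i => ¬ 0 < y i), g (y t)) = 0 := by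
        apply Finset.sum_eq_zero
        intro t ht
        rw [Finset.mem_filter] at ht
        have : y t = 0 := le_antisymm (not_lt.mp ht.2) (hy0 t)
        rw [this, hg0]
      rw [this, add_zero]
    rcases Finset.eq_empty_or_nonempty A with hAe | hAne
    · exfalso
      have : (∑ t, (y t)^2) = 0 := by
        rw [hsplit (fun a => a^2) (by norm_num), hAe, Finset.sum_empty]
      rw [this] at hyP
      linarith
    obtain ⟨k₀, hk₀A, hk₀max⟩ := Finset.exists_max_image A y hAne
    have ha : 0 < y k₀ := (Finset.mem_filter.mp hk₀A).2
    set a : ℝ := y k₀ with hadef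
    clear_value a
    set Bl : Finset (Fin m) := A.filter (fun i => y i < a) with hBldef
    have hk₀Bl : k₀ ∉ Bl := by
      rw [hBldef, Finset.mem_filter]
      push_neg
      intro _; rw [← hadef]
    have hBlcard : Bl.card ≤ 1 := by
      by_contra hc
      push_neg at hc
      obtain ⟨u, hu, v, hv, huv⟩ := Finset.one_lt_card.mp hc
      have huA : u ∈ A := (Finset.mem_filter.mp hu).1
      have hvA : v ∈ A := (Finset.mem_filter.mp hv).1
      have hua : y u < a := (Finset.mem_filter.mp hu).2
      have hva : y v < a := (Finset.mem_filter.mp hv).2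
      have hupos : 0 < y u := (Finset.mem_filter.mp huA).2
      have hvpos : 0 < y v := (Finset.mem_filter.mp hvA).2
      have huk : u ≠ k₀ := fun h => by rw [h, ← hadef] at hua; exact lt_irrefl _ hua
      have hvk : v ≠ k₀ := fun h => by rw [h, ← hadef] at hva; exact lt_irrefl _ hva
      rcases le_total (y u) (y v) with h | h
      · exact NT u v k₀ huv huk hvk hupos h (hadef ▸ hva)
      · exact NT v u k₀ (Ne.symm huv) hvk huk hvpos h (hadef ▸ hua)
    have haother : ∀ i ∈ A, i ∉ Bl → y i = a := by
      intro i hiA hiBl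
      rw [hBldef, Finset.mem_filter] at hiBl
      push_neg at hiBl
      exact le_antisymm (hk₀max i hiA) (hiBl hiA)
    rcases Finset.eq_empty_or_nonempty Bl with hBle | hBlne
    · -- all positive coordinates equal a
      have hallA : ∀ i ∈ A, y i = a := by
        intro i hiA
        exact haother i hiA (by rw [hBle]; exact Finset.notMem_empty i)
      have hsum_g : ∀ g : ℝ → ℝ, g 0 = 0 → (∑ t, g (y t)) = (A.card : ℝ) * g a := by
        intro g hg0
        rw [hsplit g hg0]
        rw [Finset.sum_congr rfl (fun i hi => by rw [hallA i hi])]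
        rw [Finset.sum_const, nsmul_eq_mul]
      have hka : (A.card : ℝ) * a ≤ s := by
        have := hsum_g (fun t => t) rfl; rw [← this]; exact hys
      have hka2 : (A.card : ℝ) * a^2 = P := by
        have := hsum_g (fun t => t^2) (by norm_num); rw [← this]; exact hyP
      have hka4 : (∑ t, (y t)^4) = (A.card : ℝ) * a^4 :=
        hsum_g (fun t => t^4) (by norm_num)
      rw [hka4]
      set K : ℝ := (A.card : ℝ) with hKdef
      clear_value K
      have hK1 : 1 ≤ K := by
        rw [hKdef]
        exact_mod_cast Nat.one_le_iff_ne_zero.mpr (Finset.card_ne_zero_of_mem hk₀A)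
      have hK0 : 0 < K := by linarith
      have hKP : K * P ≤ s^2 := by
        have hKa0 : 0 ≤ K*a := mul_nonneg (le_of_lt hK0) (le_of_lt ha)
        have hmm : (K*a)*(K*a) ≤ s*s := mul_le_mul hka hka hKa0 (le_of_lt hs)
        have he : K*P = (K*a)*(K*a) := by rw [← hka2]; ring
        nlinarith [hmm, he]
      have hKa4 : K * a^4 = P^2 / K := by
        have ha2 : a^2 = P / K := by field_simp at hka2 ⊢; linarith [hka2]
        rw [show a^4 = (a^2)^2 from by ring, ha2]
        field_simp
      rw [hKa4]
      have hKn1 : K ≤ N + 1 := by nlinarith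
      rcases le_or_gt K N with hKN | hKN
      · -- K ≤ N
        have hq := key_quartic N B s hN1 hB0 hBs
        have hPeq : N*(N+1)*P = B^2 + N*s^2 := by linarith [hB2]
        have step1 : (N^3*(B - s)^4 + (B + N*s)^4) / (N^3*(N+1)^4) ≤ P^2 / N := by
          rw [div_le_div_iff₀ (by positivity) hN0]
          have e2 : (N*(N+1)*P)^2 = (B^2 + N*s^2)^2 := by rw [hPeq]
          have e : P^2*(N^3*(N+1)^4) = (B^2+N*s^2)^2*(N*(N+1)^2) := by
            linear_combination (N*(N+1)^2) * e2
          have hmono := mul_le_mul_of_nonneg_right hq (le_of_lt hN0)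
          nlinarith [hmono, e]
        have step2 : P^2 / N ≤ P^2 / K := by
          apply div_le_div_of_nonneg_left (by positivity) hK0 hKN
        linarith
      · -- K = N + 1 (since K ≤ N+1, K > N, K and n are naturals)
        have hKeq : K = N + 1 := by
          have h1' : n < A.card := by
            have := hKN; rw [hKdef, hNdef] at this; exact_mod_cast this
          have h2' : A.card ≤ n + 1 := by
            have := hKn1; rw [hKdef, hNdef] at this; exact_mod_cast this
          have h3' : A.card = n + 1 := le_antisymm h2' h1'
          rw [hKdef, hNdef, h3']; push_cast; ring
        have hPval : (N+1)*P = s^2 := by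
          rw [hKeq] at hKP
          linarith
        have hB20 : B^2 = 0 := by
          rw [hB2]; linear_combination N * hPval
        have hBzero : B = 0 := le_antisymm (by nlinarith) hB0
        rw [hBzero, hKeq]
        apply le_of_eq
        rw [div_eq_div_iff (by positivity) (by positivity)]
        linear_combination (N^3*(N+1)^2*(s^2+(N+1)*P)) * hPval.symm
    · -- exactly one smaller positive value b
      have hBl1 : Bl.card = 1 := le_antisymm hBlcard (Finset.card_pos.mpr hBlne)
      obtain ⟨j₁, hj₁⟩ := Finset.card_eq_one.mp hBl1
      have hj₁Bl : j₁ ∈ Bl := by rw [hj₁]; exact Finset.mem_singleton_self j₁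
      have hj₁A : j₁ ∈ A := (Finset.mem_filter.mp hj₁Bl).1
      set b : ℝ := y j₁ with hbdef
      clear_value b
      have hba : b < a := by rw [hbdef]; exact (Finset.mem_filter.mp hj₁Bl).2
      have hb : 0 < b := by rw [hbdef]; exact (Finset.mem_filter.mp hj₁A).2
      have hj₁k₀ : j₁ ≠ k₀ := fun h => by rw [hbdef, h, ← hadef] at hba; exact lt_irrefl _ hba
      set A' : Finset (Fin m) := A.erase j₁ with hA'def
      have hk₀A' : k₀ ∈ A' := Finset.mem_erase.mpr ⟨Ne.symm hj₁k₀, hk₀A⟩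
      have hallA' : ∀ i ∈ A', y i = a := by
        intro i hiA'
        have hiA : i ∈ A := Finset.mem_of_mem_erase hiA'
        have hij₁ : i ≠ j₁ := Finset.ne_of_mem_erase hiA'
        apply haother i hiA
        rw [hj₁]
        simp [hij₁]
      set p : ℕ := A'.card with hpdef
      have hp1 : 1 ≤ p := by
        rw [hpdef]
        exact Nat.one_le_iff_ne_zero.mpr (Finset.card_ne_zero_of_mem hk₀A')
      have hsum_g : ∀ g : ℝ → ℝ, g 0 = 0 → (∑ t, g (y t)) = (p:ℝ) * g a + g b := by
        intro g hg0
        rw [hsplit g hg0]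
        rw [← Finset.add_sum_erase A (fun t => g (y t)) hj₁A, ← hA'def, ← hbdef]
        rw [Finset.sum_congr rfl (fun i hi => by rw [hallA' i hi])]
        rw [Finset.sum_const, nsmul_eq_mul, ← hpdef]
        ring
      have hsum1 : (p:ℝ) * a + b ≤ s := by
        have := hsum_g (fun t => t) rfl; rw [← this]; exact hys
      have hsum2 : (p:ℝ) * a^2 + b^2 = P := by
        have := hsum_g (fun t => t^2) (by norm_num); rw [← this]; exact hyP
      have hsum4 : (∑ t, (y t)^4) = (p:ℝ) * a^4 + b^4 :=
        hsum_g (fun t => t^4) (by norm_num)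
      -- the sum constraint must be tight
      have hsum_eq : (p:ℝ) * a + b = s := by
        rcases eq_or_lt_of_le hsum1 with h | h
        · exact h
        · exfalso
          apply NP k₀ j₁ (Ne.symm hj₁k₀) (hadef ▸ ha) (hbdef ▸ hb)
          · rw [← hadef, ← hbdef]; exact ne_of_gt hba
          · have := hsum_g (fun t => t) rfl
            rw [this]; exact h
      set π : ℝ := (p:ℝ) with hπdef
      clear_value π
      have hπ1 : 1 ≤ π := by rw [hπdef]; exact_mod_cast hp1
      have hπ0 : 0 < π := by linarith
      have hCS : s^2 ≤ (π+1)*P := by nlinarith [mul_nonneg (le_of_lt hπ0) (sq_nonneg (a-b))]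
      have hid : (π+1)*P - s^2 = π*(a-b)^2 := by
        rw [← hsum_eq, ← hsum2]; ring
      have hltP : π*P < s^2 := by
        have hval : s^2 - π*P = b*((π*a + b) + π*(a-b)) := by
          rw [← hsum_eq, ← hsum2]; ring
        have : 0 < b*((π*a + b) + π*(a-b)) := by
          apply mul_pos hb
          have : 0 < π*(a-b) := mul_pos hπ0 (by linarith)
          nlinarith
        linarith
      -- p = n
      have hnp : n ≤ p := by
        by_contra hc
        push_neg at hc
        have hπN : π + 1 ≤ N := by
          rw [hπdef, hNdef]
          have : p + 1 ≤ n := hc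
          exact_mod_cast this
        have : (π+1)*P ≤ N*P := by nlinarith
        have heq : (π+1)*P = s^2 := by linarith
        have : π*(a-b)^2 = 0 := by linarith [hid]
        have hab2 : (a-b)^2 = 0 := by
          rcases mul_eq_zero.mp this with h | h
          · linarith
          · exact h
        have hab : a - b = 0 := pow_eq_zero_iff (by norm_num : (2:ℕ) ≠ 0) |>.mp hab2
        linarith
      have hpn : p ≤ n := by
        have : π < N + 1 := by nlinarith
        rw [hπdef, hNdef] at this
        have : p < n + 1 := by exact_mod_cast this
        omega
      have hpeq : p = n := le_antisymm hpn hnp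
      have hπN : π = N := by rw [hπdef, hNdef, hpeq]
      rw [hπN] at hsum_eq hsum2
      -- B = N*(a-b)
      have hBval : B = N*(a-b) := by
        have hsq : B^2 = (N*(a-b))^2 := by
          rw [hB2, ← hsum_eq, ← hsum2]; ring
        have hfac : (B - N*(a-b))*(B + N*(a-b)) = 0 := by linear_combination hsq
        have hNab : 0 ≤ N*(a-b) := mul_nonneg (le_of_lt hN0) (by linarith)
        rcases mul_eq_zero.mp hfac with h | h
        · linarith
        · linarith
      rw [hsum4, hπN]
      apply le_of_eq
      rw [hBval, ← hsum_eq]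
      rw [div_eq_iff (by positivity)]
      ring
  calc (N^3*(B - s)^4 + (B + N*s)^4) / (N^3*(N+1)^4) ≤ ∑ i, (y i)^4 := hgoal
  _ ≤ ∑ i, (x i)^4 := hmin x ⟨hx0, hxs, hxP⟩


set_option maxHeartbeats 2000000 in
/-- the lower bound realized by the optimization problem underlying the
entanglement-dimensionality criterion via second and fourth moments of RRMs. -/
theorem stmt_15 (d r : ℕ) (hd : 2 ≤ d) (hr1 : 1 ≤ r) (hrd : r ≤ d)
    (L : ℕ) (hL : L = (d - 1) * (d + 2) / 2)
    (W : ℝ) (hW : W = 3 / ((L : ℝ) ^ 2 * ((L : ℝ) + 2) ^ 2))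
    (s : ℝ) (hs : s = (r : ℝ) * (d : ℝ) - 1)
    (τ : Fin L → ℝ) (hτ0 : ∀ j, 0 ≤ τ j) (hτd : ∀ j, τ j ≤ (d : ℝ) - 1)
    (hsum : ∑ j, τ j ≤ s)
    (y : ℝ) (hy : y = (∑ j, τ j ^ 2) / (L : ℝ) ^ 2)
    (Q₄ : ℝ) (hQ₄ : Q₄ = W * (2 * ∑ j, τ j ^ 4 + (L : ℝ) ^ 4 * y ^ 2)) :
    ((0 ≤ y → y ≤ s ^ 2 / (L : ℝ) ^ 3 →
        Q₄ ≥ W * (L : ℝ) ^ 3 * y ^ 2 * (2 + (L : ℝ)))) ∧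
      (∀ n : ℕ, 1 ≤ n → n ≤ L - 1 →
        s ^ 2 / ((L : ℝ) ^ 2 * ((n : ℝ) + 1)) ≤ y → y < s ^ 2 / ((L : ℝ) ^ 2 * (n : ℝ)) →
        Q₄ ≥ 2 * W *
            ((Real.sqrt ((n : ℝ) * ((n : ℝ) + 1) * (L : ℝ) ^ 2 * y - (n : ℝ) * s ^ 2) - s) ^ 4 +
              (Real.sqrt ((n : ℝ) * ((n : ℝ) + 1) * (L : ℝ) ^ 2 * y - (n : ℝ) * s ^ 2) +
                (n : ℝ) * s) ^ 4 / (n : ℝ) ^ 3) / ((n : ℝ) + 1) ^ 4 +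
          W * (L : ℝ) ^ 4 * y ^ 2) := by
  have hL2 : 2 ≤ L := by
    rw [hL]
    have h1 : 1 ≤ d - 1 := by omega
    have h2 : 4 ≤ d + 2 := by omega
    have : 4 ≤ (d - 1) * (d + 2) := by
      calc 4 = 1 * 4 := by ring
      _ ≤ (d - 1) * (d + 2) := Nat.mul_le_mul h1 h2
    omega
  have hLr : (2:ℝ) ≤ (L:ℝ) := by exact_mod_cast hL2
  have hLpos : (0:ℝ) < (L:ℝ) := by linarith
  have hW0 : 0 < W := by rw [hW]; positivity
  have hs0 : 0 < s := by
    rw [hs]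
    have h1 : (1:ℝ) ≤ (r:ℝ) := by exact_mod_cast hr1
    have h2 : (2:ℝ) ≤ (d:ℝ) := by exact_mod_cast hd
    nlinarith
  have hP : (L:ℝ)^2 * y = ∑ j, τ j ^ 2 := by
    rw [hy]; field_simp
  constructor
  · intro _ _
    have hCS : (∑ j, τ j ^ 2)^2 ≤ (L:ℝ) * ∑ j, τ j ^ 4 := by
      have h := sq_sum_le_card_mul_sum_sq (s := (Finset.univ : Finset (Fin L)))
        (f := fun j => τ j ^ 2)
      simp only [Finset.card_univ, Fintype.card_fin] at h
      calc (∑ j, τ j ^ 2)^2 ≤ (L:ℝ) * ∑ j, (τ j ^ 2) ^ 2 := h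
      _ = (L:ℝ) * ∑ j, τ j ^ 4 := by
        congr 1
        exact Finset.sum_congr rfl (fun j _ => by ring)
    have h4 : (L:ℝ)^3 * y^2 ≤ ∑ j, τ j ^ 4 := by
      have : ((L:ℝ)^2 * y)^2 ≤ (L:ℝ) * ∑ j, τ j ^ 4 := by rw [hP]; exact hCS
      nlinarith
    rw [hQ₄, ge_iff_le]
    nlinarith [mul_le_mul_of_nonneg_left h4 (le_of_lt hW0)]
  · intro n hn1 hnL hylow hyhigh
    have hN1 : (1:ℝ) ≤ (n:ℝ) := by exact_mod_cast hn1
    have hN0 : (0:ℝ) < (n:ℝ) := by linarith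
    have h1 : s^2/((n:ℝ)+1) ≤ (L:ℝ)^2 * y := by
      have := mul_le_mul_of_nonneg_left hylow (le_of_lt (mul_pos hLpos hLpos))
      calc s^2/((n:ℝ)+1) = ((L:ℝ)*(L:ℝ)) * (s^2/((L:ℝ)^2*((n:ℝ)+1))) := by
            field_simp
      _ ≤ ((L:ℝ)*(L:ℝ)) * y := this
      _ = (L:ℝ)^2 * y := by ring
    have h2 : (L:ℝ)^2 * y ≤ s^2/(n:ℝ) := by
      have := mul_le_mul_of_nonneg_left (le_of_lt hyhigh) (le_of_lt (mul_pos hLpos hLpos))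
      calc (L:ℝ)^2 * y = ((L:ℝ)*(L:ℝ)) * y := by ring
      _ ≤ ((L:ℝ)*(L:ℝ)) * (s^2/((L:ℝ)^2*(n:ℝ))) := this
      _ = s^2/(n:ℝ) := by field_simp
    have kk := key_min L n hn1 s ((L:ℝ)^2 * y) hs0 h1 h2 τ hτ0 hsum hP.symm
    rw [show (n:ℝ)*((n:ℝ)+1)*((L:ℝ)^2*y) - (n:ℝ)*s^2
        = (n:ℝ)*((n:ℝ)+1)*(L:ℝ)^2*y - (n:ℝ)*s^2 from by ring] at kk
    set G : ℝ := Real.sqrt ((n:ℝ)*((n:ℝ)+1)*(L:ℝ)^2*y - (n:ℝ)*s^2) with hGdef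
    have heq : 2*W*((G-s)^4 + (G+(n:ℝ)*s)^4/(n:ℝ)^3)/((n:ℝ)+1)^4
        = 2*W*(((n:ℝ)^3*(G-s)^4+(G+(n:ℝ)*s)^4)/((n:ℝ)^3*((n:ℝ)+1)^4)) := by
      field_simp
    rw [hQ₄, ge_iff_le, heq]
    have hstep := mul_le_mul_of_nonneg_left kk (show (0:ℝ) ≤ 2*W by linarith)
    linarith [hstep]
end
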